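/- arXiv:math/0301325 — 8 statements merged into one kernel-verified Lean document; each statement's English description precedes it below -/
import Mathlib

section
/- Let H be a perfect group (its commutator subgroup equals H) and let φ : H → G be a localization map, i.e. for every homomorphism ψ : H → G there exists a unique endomorphism χ : G → G with χ ∘ φ = ψ. Then G is almost perfect: every endomorphism of G that factors through a commutative group is trivial. -/
/-- If `H` is perfect and `φ : H → G` is a localization map, then `G` is almost
perfect: every endomorphism of `G` factoring through a commutative group is trivial. -/
theorem almost_perfect_of_localization_of_perfect
    {H : Type*} {G : Type*} [Group H] [Group G] (φ : H →* G)
    (hperf : commutator H = ⊤)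
    (hloc : ∀ ψ : H →* G, ∃! χ : G →* G, χ.comp φ = ψ) :
    ∀ (A : Type*) [CommGroup A] (f : G →* A) (g : A →* G), g.comp f = 1 := by
  intro A _ f g
  have hψ : (f.comp φ) = 1 := by
    ext h
    have : commutator H ≤ (f.comp φ).ker := Abelianization.commutator_subset_ker _
    rw [hperf, top_le_iff] at this
    have : h ∈ (f.comp φ).ker := this.ge (Subgroup.mem_top h)
    simpa using this
  obtain ⟨χ, _, huniq⟩ := hloc 1
  have h1 : ((g.comp f).comp φ) = 1 := by
    rw [MonoidHom.comp_assoc, hψ]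
    ext h; simp
  have h2 : ((1 : G →* G).comp φ) = 1 := by ext h; simp
  rw [huniq _ h1, huniq _ h2]
end

section
/- Let H be a perfect group and let φ : H → G be a localization map with G a finite group. Then G is perfect. -/
/-- If `H` is a perfect group and `φ : H → G` is a localization map with `G` finite,
then `G` is perfect. -/
theorem perfect_of_finite_localization_of_perfect
    {H : Type*} {G : Type*} [Group H] [Group G] [Finite G] (φ : H →* G)
    (hperf : commutator H = ⊤)
    (hloc : ∀ ψ : H →* G, ∃! χ : G →* G, χ.comp φ = ψ) :
    commutator G = ⊤ := by
  by_contra hG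
  -- the abelianization of `G` is nontrivial
  obtain ⟨g, hg⟩ : ∃ g : G, g ∉ commutator G := by
    by_contra h
    push_neg at h
    exact hG (Subgroup.eq_top_iff' _ |>.mpr h)
  have hg1 : Abelianization.of g ≠ (1 : Abelianization G) := by
    intro h
    exact hg ((QuotientGroup.eq_one_iff g).mp h)
  -- structure theorem
  obtain ⟨ι, _, n, hn, ⟨e⟩⟩ :=
    CommGroup.equiv_prod_multiplicative_zmod_of_finite (Abelianization G)
  obtain ⟨i, hi⟩ : ∃ i : ι, e (Abelianization.of g) i ≠ 1 := by
    by_contra h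
    push_neg at h
    exact hg1 (e.map_eq_one_iff.mp (funext h))
  set m := n i with hm
  have hm1 : 1 < m := hn i
  obtain ⟨p, hp, hpm⟩ := Nat.exists_prime_and_dvd (n := m) (by omega)
  -- p divides the order of G
  have hsurj : Function.Surjective (Abelianization.of (G := G)) :=
    fun b => QuotientGroup.mk_surjective b
  have hcard1 : Nat.card (Abelianization G) ∣ Nat.card G :=
    Subgroup.card_dvd_of_surjective Abelianization.of hsurj
  have hcard2 : m ∣ Nat.card (Abelianization G) := by
    rw [Nat.card_congr e.toEquiv, Nat.card_pi]
    have : ∀ j, Nat.card (Multiplicative (ZMod (n j))) = n j := by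
      intro j
      rw [Nat.card_congr Multiplicative.toAdd, Nat.card_zmod]
    calc m ∣ ∏ j, n j := Finset.dvd_prod_of_mem n (Finset.mem_univ i)
      _ = ∏ j, Nat.card (Multiplicative (ZMod (n j))) := by simp [this]
  have hpG : p ∣ Nat.card G := hpm.trans (hcard2.trans hcard1)
  haveI : Fact p.Prime := ⟨hp⟩
  obtain ⟨x, hx⟩ := exists_prime_orderOf_dvd_card' (G := G) p hpG
  have hx1 : x ≠ 1 := by
    intro h
    rw [h, orderOf_one] at hx
    exact hp.one_lt.ne' hx.symm
  -- build a homomorphism Multiplicative (ZMod m) →* G sending ofAdd 1 to x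
  have hxm : (zmultiplesHom (Additive G) (Additive.ofMul x)) (m : ℤ) = 0 := by
    show ((m : ℤ) • Additive.ofMul x) = 0
    have hxm' : x ^ (m : ℤ) = 1 := by
      rw [zpow_natCast]
      exact orderOf_dvd_iff_pow_eq_one.mp (hx ▸ hpm)
    rw [← ofMul_zpow, hxm']
    rfl
  set F₀ : Multiplicative (ZMod m) →* G :=
    AddMonoidHom.toMultiplicativeLeft (ZMod.lift m ⟨_, hxm⟩) with hF₀
  have hF₀1 : F₀ (Multiplicative.ofAdd (1 : ZMod m)) = x := by
    have h1 : (1 : ZMod m) = ((1 : ℤ) : ZMod m) := by norm_cast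
    show ((ZMod.lift m ⟨_, hxm⟩) (1 : ZMod m)).toMul = x
    rw [h1, ZMod.lift_coe]
    show ((1 : ℤ) • Additive.ofMul x).toMul = x
    simp
  -- the endomorphism of G
  set f : G →* G :=
    F₀.comp ((Pi.evalMonoidHom (fun j => Multiplicative (ZMod (n j))) i).comp
      (e.toMonoidHom.comp Abelianization.of)) with hf
  -- φ lands in the commutator subgroup of G
  have hrange : φ.range ≤ commutator G := by
    rw [MonoidHom.range_eq_map, ← hperf, commutator_def, commutator_def,
      Subgroup.map_commutator]
    exact Subgroup.commutator_mono le_top le_top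
  have hfφ : f.comp φ = 1 := by
    ext h
    have : φ h ∈ commutator G := hrange ⟨h, rfl⟩
    have h0 : Abelianization.of (φ h) = 1 := (QuotientGroup.eq_one_iff _).mpr this
    simp [hf, h0]
  -- uniqueness in the localization forces f = 1
  obtain ⟨χ, hχ, huniq⟩ := hloc 1
  have hf1 : f = (1 : G →* G) := by
    rw [huniq f hfφ, ← huniq 1 (by ext h; rfl)]
  -- but f is nontrivial
  obtain ⟨q, hq⟩ := (Function.surjective_eval i).comp (e.surjective.comp hsurj)
    (Multiplicative.ofAdd (1 : ZMod m))
  have : f q = x := by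
    have hq' : e (Abelianization.of q) i = Multiplicative.ofAdd (1 : ZMod m) := hq
    show F₀ (e (Abelianization.of q) i) = x
    rw [hq']
    exact hF₀1
  rw [hf1] at this
  exact hx1 (by simpa using this.symm)
end

section
/- Let H be a non-abelian finite simple group and let φ : H → G be a localization map with G a finite group. Then G is perfect. -/
/-!
A non-abelian simple group `H` is perfect, so `φ` lands in `[G, G]` and every endomorphism
of `G` that factors through the abelianization kills `φ`. If `G` were not perfect, its finite
abelianization would have a quotient of prime order `p`, which embeds into `G` by Cauchy's
theorem; this gives such an endomorphism that is nontrivial, while the trivial one also kills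
`φ`, contradicting uniqueness in the localization property.
-/

open Group

theorem IsSimpleGroup.isPerfect_of_exists_mul_ne {H : Type*} [Group H] [IsSimpleGroup H]
    (h : ∃ a b : H, a * b ≠ b * a) : IsPerfect H := by
  refine ⟨(Subgroup.commutator_normal ⊤ ⊤).eq_bot_or_eq_top.resolve_left fun hbot => ?_⟩
  obtain ⟨a, b, hab⟩ := h
  exact hab (((commutator_eq_bot_iff H).mp hbot).is_comm.comm a b)

theorem MonoidHom.range_le_commutator {H G : Type*} [Group H] [Group G] [IsPerfect H]
    (f : H →* G) : f.range ≤ commutator G := by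
  rw [MonoidHom.range_eq_map, ← IsPerfect.commutator_eq_top, commutator, Subgroup.map_commutator]
  exact Subgroup.commutator_mono le_top le_top

theorem QuotientGroup.isSimpleGroup_of_isCoatom {G : Type*} [Group G] {N : Subgroup G} [N.Normal]
    (hN : IsCoatom N) : IsSimpleGroup (G ⧸ N) := by
  have : IsSimpleOrder (Set.Ici N) := Set.isSimpleOrder_Ici_iff_isCoatom.mpr hN
  have : IsSimpleOrder (Subgroup (G ⧸ N)) :=
    OrderIso.isSimpleOrder (β := Set.Ici N) (QuotientGroup.comapMk'OrderIso N)
  have : Nontrivial (G ⧸ N) := (Subgroup.nontrivial_iff).mp inferInstance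
  exact ⟨fun K _ => IsSimpleOrder.eq_bot_or_eq_top K⟩

theorem exists_injective_monoidHom_of_prime_card_dvd {Q G : Type*} [Group Q] [Group G] [Finite G]
    (hp : (Nat.card Q).Prime) (hdvd : Nat.card Q ∣ Nat.card G) :
    ∃ θ : Q →* G, Function.Injective θ := by
  have : Fact (Nat.card Q).Prime := ⟨hp⟩
  obtain ⟨g, hg⟩ := exists_prime_orderOf_dvd_card' (Nat.card Q) hdvd
  have hcard : Nat.card (Subgroup.zpowers g) = Nat.card Q := by rw [Nat.card_zpowers, hg]
  have : IsCyclic Q := isCyclic_of_prime_card rfl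
  have : IsCyclic (Subgroup.zpowers g) := isCyclic_of_prime_card hcard
  exact ⟨(Subgroup.zpowers g).subtype.comp (mulEquivOfCyclicCardEq hcard.symm).toMonoidHom,
    (Subgroup.subtype_injective _).comp (MulEquiv.injective _)⟩

theorem CommGroup.exists_monoidHom_ne_one_of_card_dvd {A G : Type*} [CommGroup A] [Group G]
    [Finite A] [Finite G] [Nontrivial A] (hdvd : Nat.card A ∣ Nat.card G) :
    ∃ χ : A →* G, χ ≠ 1 := by
  obtain ⟨M, hM⟩ := IsCoatomic.exists_coatom (Subgroup A)
  have : IsSimpleGroup (A ⧸ M) := QuotientGroup.isSimpleGroup_of_isCoatom hM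
  obtain ⟨θ, hθ⟩ := exists_injective_monoidHom_of_prime_card_dvd IsSimpleGroup.prime_card
    ((Subgroup.card_quotient_dvd_card M).trans hdvd)
  refine ⟨θ.comp (QuotientGroup.mk' M), fun h => ?_⟩
  obtain ⟨q, hq⟩ := exists_ne (1 : A ⧸ M)
  obtain ⟨a, rfl⟩ := QuotientGroup.mk'_surjective M q
  exact hq (hθ (by simpa using DFunLike.congr_fun h a))

theorem perfect_of_finite_localization_of_simple_general
    {H : Type*} {G : Type*} [Group H] [Group G] [Finite G]
    [IsSimpleGroup H] (hnab : ∃ a b : H, a * b ≠ b * a) (φ : H →* G)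
    (hloc : ∀ ψ : H →* G, ∃! χ : G →* G, χ.comp φ = ψ) :
    commutator G = ⊤ := by
  have : IsPerfect H := IsSimpleGroup.isPerfect_of_exists_mul_ne hnab
  by_contra hG
  have : Nontrivial (Abelianization G) := not_subsingleton_iff_nontrivial.mp
    fun h => hG (QuotientGroup.subgroup_eq_top_of_subsingleton _ h)
  obtain ⟨χ, hχ⟩ := CommGroup.exists_monoidHom_ne_one_of_card_dvd (A := Abelianization G)
    (Subgroup.card_quotient_dvd_card _)
  have hχφ : (χ.comp Abelianization.of).comp φ = 1 := by
    ext h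
    have : Abelianization.of (φ h) = 1 := by
      rw [← MonoidHom.mem_ker, Abelianization.ker_of]
      exact φ.range_le_commutator ⟨h, rfl⟩
    simp [this]
  exact hχ (Abelianization.hom_ext _ _ ((hloc 1).unique hχφ (MonoidHom.one_comp φ)))

/-- If `H` is a non-abelian finite simple group and `φ : H → G` is a localization map
with `G` finite, then `G` is perfect. -/
theorem perfect_of_finite_localization_of_simple
    {H : Type*} {G : Type*} [Group H] [Group G] [Finite H] [Finite G]
    [IsSimpleGroup H] (hnab : ∃ a b : H, a * b ≠ b * a) (φ : H →* G)
    (hloc : ∀ ψ : H →* G, ∃! χ : G →* G, χ.comp φ = ψ) :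
    commutator G = ⊤ :=
  perfect_of_finite_localization_of_simple_general hnab φ hloc
end

section
/- Let F be the free group on generators x₀, …, x_{n-1} (n ≥ 1), and let S be the subgroup generated by x₀, …, x_{n-2}. If an element w of F does not belong to S, then for every nonzero integer k the power w^k does not belong to S. -/
/-!
Killing the generators outside `s` is an endomorphism of the free group whose fixed points are
exactly the subgroup generated by `s`. Fixed points of an endomorphism of a torsion-free group are
closed under taking roots, since `f g ^ k = g ^ k` forces `f g = g`, and free groups are
torsion-free.
-/

theorem MonoidHom.apply_eq_self_of_apply_zpow_eq_self {G : Type*} [Group G] [IsMulTorsionFree G]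
    (f : G →* G) {g : G} {k : ℤ} (hk : k ≠ 0) (h : f (g ^ k) = g ^ k) : f g = g :=
  (zpow_left_inj hk).mp (by rwa [map_zpow] at h)

namespace FreeGroup

variable {α : Type*} (s : Set α)

noncomputable def killOutside : FreeGroup α →* FreeGroup α :=
  lift (s.mulIndicator of)

theorem killOutside_mem_closure (w : FreeGroup α) :
    killOutside s w ∈ Subgroup.closure (of '' s) := by
  refine range_lift_le ?_ ⟨w, rfl⟩
  rintro _ ⟨i, rfl⟩
  by_cases hi : i ∈ s
  · rw [Set.mulIndicator_of_mem hi]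
    exact Subgroup.subset_closure ⟨i, hi, rfl⟩
  · rw [Set.mulIndicator_of_notMem hi]
    exact one_mem _

theorem closure_le_eqLocus_killOutside :
    Subgroup.closure (of '' s) ≤ (killOutside s).eqLocus (MonoidHom.id _) := by
  rw [Subgroup.closure_le]
  rintro _ ⟨i, hi, rfl⟩
  change lift _ (of i) = of i
  rw [lift_apply_of, Set.mulIndicator_of_mem hi]

theorem killOutside_eq_self_iff {w : FreeGroup α} :
    killOutside s w = w ↔ w ∈ Subgroup.closure (of '' s) :=
  ⟨fun h => h ▸ killOutside_mem_closure s w, fun h => closure_le_eqLocus_killOutside s h⟩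

theorem mem_closure_of_zpow_mem {w : FreeGroup α} {k : ℤ} (hk : k ≠ 0)
    (h : w ^ k ∈ Subgroup.closure (of '' s)) : w ∈ Subgroup.closure (of '' s) := by
  rw [← killOutside_eq_self_iff] at h ⊢
  exact (killOutside s).apply_eq_self_of_apply_zpow_eq_self hk h

end FreeGroup

theorem zpow_not_mem_closure_init_general
    {n : ℕ}
    (S : Subgroup (FreeGroup (Fin n)))
    (hS : S = Subgroup.closure (FreeGroup.of '' {i : Fin n | (i : ℕ) < n - 1}))
    (w : FreeGroup (Fin n)) (hw : w ∉ S) :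
    ∀ k : ℤ, k ≠ 0 → w ^ k ∉ S := by
  subst hS
  exact fun k hk hwk => hw (FreeGroup.mem_closure_of_zpow_mem _ hk hwk)

/-- In the free group on `n ≥ 1` generators, if a word `w` lies outside the subgroup
generated by the first `n - 1` generators, then so does `w ^ k` for every `k ≠ 0`. -/
theorem zpow_not_mem_closure_init
    {n : ℕ} (hn : 1 ≤ n)
    (S : Subgroup (FreeGroup (Fin n)))
    (hS : S = Subgroup.closure (FreeGroup.of '' {i : Fin n | (i : ℕ) < n - 1}))
    (w : FreeGroup (Fin n)) (hw : w ∉ S) :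
    ∀ k : ℤ, k ≠ 0 → w ^ k ∉ S :=
  zpow_not_mem_closure_init_general S hS w hw
end

section
/- Let φ : F_n → F_{2n} be the homomorphism between free groups determined by sending the i-th generator x_i to the commutator [x_{2i}, x_{2i+1}] of two generators of F_{2n} (0-indexed, 0 ≤ i < n). If w ∈ F_n satisfies φ(w) = u^k for some u ∈ F_{2n} and some nonzero integer k, then there exists v ∈ F_n with φ(v) = u and v^k = w. -/
/-!
Write `φ` for `phi n`. It sends a reduced word `X` to the word `phiWord X` obtained by replacing
each letter by the four letters of the corresponding commutator; this word is again reduced, and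
cyclically reduced when `X` is. Hence `φ` is injective, and it suffices to show that `u` lies in
the image of `φ`.

After conjugating we may assume that the reduced word `R` of `w` is cyclically reduced. Then
`phiWord R` is the reduced word of `u ^ k`, and being cyclically reduced it is the `k`-fold
repetition of the reduced word `U` of `u`. So `phiWord R` is invariant under rotation by `|U|`.
Its exponents follow the pattern `+ + - -` of period 4, so `4 ∣ |U|`, and `U`, a prefix of
`phiWord R`, consists of whole blocks: `U = phiWord Y` and `u = φ (mk Y)`.
-/

open scoped commutatorElement

/-- The homomorphism `F_n → F_{2n}` sending the `i`-th generator `xᵢ` to the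
commutator `⁅x_{2i}, x_{2i+1}⁆`. -/
noncomputable def phi (n : ℕ) : FreeGroup (Fin n) →* FreeGroup (Fin (2 * n)) :=
  FreeGroup.lift fun i =>
    ⁅FreeGroup.of (⟨2 * (i : ℕ), by have := i.isLt; omega⟩ : Fin (2 * n)),
     FreeGroup.of (⟨2 * (i : ℕ) + 1, by have := i.isLt; omega⟩ : Fin (2 * n))⁆

open List FreeGroup

namespace FreeGroup

variable {α : Type*} [DecidableEq α]

open reduceCyclically in
theorem toWord_pow_of_isCyclicallyReduced {x : FreeGroup α} {k : ℕ} (hk : k ≠ 0)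
    (h : IsCyclicallyReduced (x ^ k).toWord) : (x ^ k).toWord = (replicate k x.toWord).flatten := by
  have hpow : (x ^ k).toWord = conjugator x.toWord ++
      (replicate k (reduceCyclically x.toWord)).flatten ++ invRev (conjugator x.toWord) := by
    rw [toWord_pow, reduce_flatten_replicate isReduced_toWord, if_neg hk]
  -- a nonempty conjugator would make the first and last letters cancel
  have hC : conjugator x.toWord = [] := by
    rw [hpow] at h
    generalize conjugator x.toWord = C at h
    rcases C with _ | ⟨c, C⟩
    · rfl
    · have := h.2 (c.1, !c.2) (by rw [invRev_cons, getLast?_append]; simp [invRev]) c (by simp)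
      simp at this
  have hx : x.toWord = reduceCyclically x.toWord := by
    simpa [hC] using (conj_conjugator_reduceCyclically x.toWord).symm
  rw [hpow, hC, ← hx]
  simp

open reduceCyclically in
theorem exists_conj_isCyclicallyReduced (g : FreeGroup α) :
    ∃ p : FreeGroup α, ∃ R, IsCyclicallyReduced R ∧ g = p * mk R * p⁻¹ :=
  ⟨mk (conjugator g.toWord), reduceCyclically g.toWord, isCyclicallyReduced isReduced_toWord, by
    rw [inv_mk, mul_mk, mul_mk, conj_conjugator_reduceCyclically, mk_toWord]⟩

end FreeGroup

theorem List.rotate_length_flatten_replicate {α : Type*} (l : List α) (k : ℕ) :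
    (replicate k l).flatten.rotate l.length = (replicate k l).flatten := by
  cases k with
  | zero => simp
  | succ k =>
    conv_lhs => rw [replicate_succ, flatten_cons, rotate_append_length_eq]
    rw [← flatten_concat, ← replicate_succ']

theorem Subgroup.mem_of_zpow_mem {G : Type*} [Group G] {H : Subgroup G}
    (hH : ∀ {g : G} {k : ℕ}, k ≠ 0 → g ^ k ∈ H → g ∈ H) {g : G} {k : ℤ} (hk : k ≠ 0)
    (h : g ^ k ∈ H) : g ∈ H := by
  refine hH (Int.natAbs_ne_zero.2 hk) ?_
  rcases Int.natAbs_eq k with e | e <;> rw [e] at h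
  · rwa [zpow_natCast] at h
  · rwa [zpow_neg, inv_mem_iff, zpow_natCast] at h

section phiWord

variable {n : ℕ}

def phiLetter : Fin n × Bool → List (Fin (2 * n) × Bool)
  | (i, true) => [(⟨2 * i, by omega⟩, true), (⟨2 * i + 1, by omega⟩, true),
      (⟨2 * i, by omega⟩, false), (⟨2 * i + 1, by omega⟩, false)]
  | (i, false) => [(⟨2 * i + 1, by omega⟩, true), (⟨2 * i, by omega⟩, true),
      (⟨2 * i + 1, by omega⟩, false), (⟨2 * i, by omega⟩, false)]

def phiWord (X : List (Fin n × Bool)) : List (Fin (2 * n) × Bool) := X.flatMap phiLetter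

theorem phi_mk (X : List (Fin n × Bool)) : phi n (mk X) = mk (phiWord X) := by
  induction X with
  | nil => rfl
  | cons x X ih =>
    rw [show mk (x :: X) = mk [x] * mk X from (mul_mk (L₁ := [x])).symm, _root_.map_mul, ih,
      phiWord, phiWord, flatMap_cons, ← mul_mk]
    rcases x with ⟨i, _ | _⟩ <;> rfl

theorem length_phiLetter (x : Fin n × Bool) : (phiLetter x).length = 4 := by
  rcases x with ⟨i, _ | _⟩ <;> rfl

theorem phiLetter_ne_nil (x : Fin n × Bool) : phiLetter x ≠ [] :=
  ne_nil_of_length_pos (by rw [length_phiLetter]; omega)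

theorem length_phiWord (X : List (Fin n × Bool)) : (phiWord X).length = 4 * X.length := by
  simp [phiWord, length_flatMap, length_phiLetter, mul_comm]

theorem phiLetter_injective : Function.Injective (phiLetter (n := n)) := by
  rintro ⟨i, _ | _⟩ ⟨j, _ | _⟩ h <;> simp [phiLetter, Fin.ext_iff] at h ⊢ <;> omega

theorem phiWord_injective : Function.Injective (phiWord (n := n)) := by
  intro X Y h
  have hlen := congrArg length h
  rw [length_phiWord, length_phiWord] at hlen
  induction X generalizing Y with
  | nil => simp_all
  | cons x X ih =>
    rcases Y with _ | ⟨y, Y⟩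
    · simp at hlen
    · obtain ⟨hxy, hXY⟩ := append_inj h (by rw [length_phiLetter, length_phiLetter])
      rw [phiLetter_injective hxy, ih hXY (by simpa using hlen)]

theorem phiLetter_junction {x y : Fin n × Bool} (h : x.1 = y.1 → x.2 = y.2) :
    ∀ a ∈ (phiLetter x).getLast?, ∀ b ∈ (phiLetter y).head?, a.1 = b.1 → a.2 = b.2 := by
  rcases x with ⟨i, _ | _⟩ <;> rcases y with ⟨j, _ | _⟩ <;>
    simp [phiLetter, Fin.ext_iff] at h ⊢ <;> omega

theorem isReduced_phiLetter (x : Fin n × Bool) : FreeGroup.IsReduced (phiLetter x) := by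
  rcases x with ⟨i, _ | _⟩ <;> simp [phiLetter, FreeGroup.IsReduced]

theorem isReduced_phiWord {X : List (Fin n × Bool)} (h : FreeGroup.IsReduced X) :
    FreeGroup.IsReduced (phiWord X) := by
  rw [FreeGroup.IsReduced, phiWord, flatMap_def, isChain_flatten (by simp [phiLetter_ne_nil]),
    isChain_map]
  exact ⟨fun l hl => by obtain ⟨x, -, rfl⟩ := mem_map.1 hl; exact isReduced_phiLetter x,
     h.imp fun _ _ => phiLetter_junction⟩

theorem isCyclicallyReduced_phiWord {X : List (Fin n × Bool)} (h : IsCyclicallyReduced X) :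
    IsCyclicallyReduced (phiWord X) := by
  refine ⟨isReduced_phiWord h.isReduced, ?_⟩
  rcases X with _ | ⟨x, X'⟩
  · simp [phiWord]
  obtain ⟨Y, y, hY⟩ : ∃ Y y, x :: X' = Y ++ [y] :=
    ⟨_, _, (dropLast_append_getLast (cons_ne_nil x X')).symm⟩
  have hlast : (phiWord (x :: X')).getLast? = (phiLetter y).getLast? := by
    rw [hY, phiWord, flatMap_append, flatMap_singleton,
      getLast?_append_of_ne_nil _ (phiLetter_ne_nil y)]
  have hhead : (phiWord (x :: X')).head? = (phiLetter x).head? := by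
    rw [phiWord, flatMap_cons, head?_append_of_ne_nil _ (phiLetter_ne_nil x)]
  rw [hlast, hhead]
  exact phiLetter_junction (h.2 y (by simp [hY]) x (by simp))

theorem toWord_phi (g : FreeGroup (Fin n)) : (phi n g).toWord = phiWord g.toWord :=
  calc (phi n g).toWord = (mk (phiWord g.toWord)).toWord := by rw [← phi_mk, mk_toWord]
    _ = phiWord g.toWord := by rw [toWord_mk, (isReduced_phiWord isReduced_toWord).reduce_eq]

theorem phi_injective (n : ℕ) : Function.Injective (phi n) := fun g h hgh =>
  toWord_injective (phiWord_injective (by rw [← toWord_phi, ← toWord_phi, hgh]))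

theorem take_phiWord (X : List (Fin n × Bool)) (t : ℕ) :
    (phiWord X).take (4 * t) = phiWord (X.take t) := by
  induction X generalizing t with
  | nil => simp [phiWord]
  | cons x X ih =>
    rcases t with _ | t
    · simp [phiWord]
    · rw [phiWord, flatMap_cons, take_append, length_phiLetter,
        take_of_length_le (by rw [length_phiLetter]; omega), show 4 * (t + 1) - 4 = 4 * t by omega,
        ← phiWord, ih]
      rfl

theorem snd_getElem_phiWord (X : List (Fin n × Bool)) (i : ℕ) (hi : i < (phiWord X).length) :
    (phiWord X)[i].2 = decide (i % 4 < 2) := by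
  induction X generalizing i with
  | nil => simp [phiWord] at hi
  | cons x X ih =>
    simp only [phiWord, flatMap_cons, getElem_append, length_append, length_phiLetter] at ih hi ⊢
    split_ifs with h4
    · rcases x with ⟨j, _ | _⟩ <;> interval_cases i <;> rfl
    · rw [ih _ (by omega), show (i - 4) % 4 = i % 4 by omega]

theorem four_dvd_of_rotate_phiWord_eq {X : List (Fin n × Bool)} {d : ℕ}
    (h : (phiWord X).rotate d = phiWord X) (hX : X ≠ []) : 4 ∣ d := by
  have hpos : 0 < X.length := length_pos_of_ne_nil hX
  have hsign : ∀ i < 2, (i + d) % 4 < 2 := by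
    intro i hi
    have hi' : i < (phiWord X).length := by rw [length_phiWord]; omega
    have e := congrArg Prod.snd (getElem_of_eq h.symm hi')
    rw [getElem_rotate, snd_getElem_phiWord, snd_getElem_phiWord, length_phiWord,
      Nat.mod_mod_of_dvd _ (dvd_mul_right 4 _)] at e
    simpa [Nat.mod_eq_of_lt (show i < 4 by omega), hi] using e.symm
  have := hsign 0 (by omega)
  have := hsign 1 (by omega)
  omega

theorem exists_phiWord_eq_of_flatten_replicate_eq {U : List (Fin (2 * n) × Bool)}
    {X : List (Fin n × Bool)} {k : ℕ} (hk : k ≠ 0) (h : (replicate k U).flatten = phiWord X) :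
    ∃ Y, phiWord Y = U := by
  rcases eq_or_ne X [] with rfl | hX
  · exact ⟨[], by simp_all [phiWord]⟩
  obtain ⟨t, ht⟩ := four_dvd_of_rotate_phiWord_eq (by rw [← h, rotate_length_flatten_replicate]) hX
  refine ⟨X.take t, ?_⟩
  obtain ⟨k, rfl⟩ := Nat.exists_eq_add_one_of_ne_zero hk
  rw [← take_phiWord, ← h, ← ht, replicate_succ, flatten_cons, take_left' rfl]

theorem mem_range_phi_of_pow_mem {u : FreeGroup (Fin (2 * n))} {k : ℕ} (hk : k ≠ 0)
    (h : u ^ k ∈ (phi n).range) : u ∈ (phi n).range := by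
  obtain ⟨w, hw⟩ := h
  obtain ⟨p, R, hR, rfl⟩ := exists_conj_isCyclicallyReduced w
  set q := phi n p with hq
  suffices q⁻¹ * u * q ∈ (phi n).range by
    have hq_mem : q ∈ (phi n).range := MonoidHom.mem_range.2 ⟨p, rfl⟩
    convert mul_mem (mul_mem hq_mem this) (inv_mem hq_mem) using 1
    group
  have hpow : (q⁻¹ * u * q) ^ k = phi n (mk R) := by
    rw [show q⁻¹ * u * q = q⁻¹ * u * q⁻¹⁻¹ by group, conj_pow, ← hw, _root_.map_mul,
      _root_.map_mul, _root_.map_inv, ← hq]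
    group
  have hword : ((q⁻¹ * u * q) ^ k).toWord = phiWord R := by
    rw [hpow, toWord_phi, toWord_mk, hR.isReduced.reduce_eq]
  have hrep := toWord_pow_of_isCyclicallyReduced hk (hword ▸ isCyclicallyReduced_phiWord hR)
  obtain ⟨Y, hY⟩ := exists_phiWord_eq_of_flatten_replicate_eq hk (hrep.symm.trans hword)
  exact ⟨mk Y, by rw [phi_mk, hY, mk_toWord]⟩

end phiWord

/-- If `φ w = u ^ k` for some `k ≠ 0`, then there is `v` with `φ v = u` and `v ^ k = w`. -/
theorem exists_root_preimage (n : ℕ) (w : FreeGroup (Fin n))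
    (u : FreeGroup (Fin (2 * n))) (k : ℤ) (hk : k ≠ 0)
    (h : phi n w = u ^ k) :
    ∃ v : FreeGroup (Fin n), phi n v = u ∧ v ^ k = w := by
  obtain ⟨v, rfl⟩ :=
    Subgroup.mem_of_zpow_mem mem_range_phi_of_pow_mem hk (MonoidHom.mem_range.2 ⟨w, h⟩)
  exact ⟨v, rfl, phi_injective n (by rw [map_zpow, h])⟩
end

section
/- For each n ≥ 0 let φ_n : F_{2^n} → F_{2^{n+1}} be the homomorphism between free groups sending the i-th generator x_i to the commutator [x_{2i}, x_{2i+1}] (0 ≤ i < 2^n), and let ψ_n : F_1 → F_{2^n} denote the composite φ_{n-1} ∘ ⋯ ∘ φ_0. Then for every prime p and every n ≥ 0, the element ψ_n(x₀), the image of the generator of F_1, has no p-th root in F_{2^n}: there is no y ∈ F_{2^n} with y^p = ψ_n(x₀). -/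
open scoped commutatorElement

/-- Re-indexing isomorphism of free groups along an equality of the number of
generators. -/
noncomputable def castHom {m k : ℕ} (h : m = k) :
    FreeGroup (Fin m) →* FreeGroup (Fin k) :=
  FreeGroup.lift fun i => FreeGroup.of (Fin.cast h i)

/-- The composite `ψₙ = φ_{n-1} ∘ ⋯ ∘ φ₀ : F_1 → F_{2^n}`. -/
noncomputable def psi : (n : ℕ) → (FreeGroup (Fin 1) →* FreeGroup (Fin (2 ^ n)))
  | 0 => castHom (by norm_num)
  | n + 1 => (castHom (by ring)).comp ((phi (2 ^ n)).comp (psi n))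

/-!
The Magnus map `xᵢ ↦ 1 + Xᵢ T` sends `F_ℕ` into the units of `A⟦T⟧`, where
`A = 𝔽_p⟨X₀, X₁, …⟩` is the free algebra, and it sends `ψₙ(x₀)` to `1 + L T^(2^n) + O(T^(2^n+1))`
with `L ≠ 0` the nested ring commutator of `X₀, …, X_{2^n-1}`. If `y^p = ψₙ(x₀)` and `1 + s` is
the image of `y`, then `s^p = L T^(2^n) + ⋯` by Frobenius. Since `A` is a domain (words admit the
bi-invariant shortlex order), comparing lowest terms gives `p · ord s = 2^n` and `L = c^p` for
the lowest coefficient `c` of `s`, so `p = 2`. But `c²` contains the word `w w` for the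
shortlex-largest word `w` of `c`, whereas every word of `L = ⁅L₀, L₁⁆` is `u v` with `u` and `v`
of equal length in disjoint sets of letters.
-/

open PowerSeries
open scoped Pointwise

theorem List.append_lt_append_of_length_eq {α : Type*} [LT α] (t : List α) :
    ∀ {l₁ l₂ : List α}, l₁ < l₂ → l₁.length = l₂.length → l₁ ++ t < l₂ ++ t
  | _, _, .rel h, _ => .rel h
  | _, _, .cons h, hl => .cons (append_lt_append_of_length_eq t h (by simpa using hl))

namespace FreeMonoid

theorem mul_inj_of_length_eq {α : Type*} {u v u' v' : FreeMonoid α} (h : u * v = u' * v')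
    (hl : u.length = u'.length) : u = u' ∧ v = v' := by
  obtain ⟨h₁, h₂⟩ := List.append_inj (congrArg toList h) hl
  exact ⟨toList.injective h₁, toList.injective h₂⟩

variable {α : Type*} [LinearOrder α]

local instance shortlex : LinearOrder (FreeMonoid α) :=
  LinearOrder.lift' (fun w => toLex (w.length, w.toList)) fun _ _ h => by
    simpa using congrArg (fun x => (ofLex x).2) h

theorem shortlex_lt_iff {v w : FreeMonoid α} :
    v < w ↔ v.length < w.length ∨ v.length = w.length ∧ v.toList < w.toList :=
  Prod.Lex.toLex_lt_toLex

local instance : MulLeftStrictMono (FreeMonoid α) where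
  elim u v w h := by
    simp only [shortlex_lt_iff, length_mul, toList_mul] at h ⊢
    rcases h with h | ⟨hl, h⟩
    · omega
    · exact .inr ⟨by omega, List.append_left_lt h⟩

local instance : MulRightStrictMono (FreeMonoid α) where
  elim u v w h := by
    simp only [Function.swap, shortlex_lt_iff, length_mul, toList_mul] at h ⊢
    rcases h with h | ⟨hl, h⟩
    · omega
    · exact .inr ⟨by omega, List.append_lt_append_of_length_eq _ h hl⟩

theorem exists_uniqueMul_self {A : Finset (FreeMonoid α)} (hA : A.Nonempty) :
    ∃ a ∈ A, UniqueMul A A a a := by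
  have := mulLeftMono_of_mulLeftStrictMono (FreeMonoid α)
  refine ⟨A.max' hA, A.max'_mem hA, fun a b ha hb hab => ?_⟩
  rcases (A.le_max' a ha).lt_or_eq with h | h
  · exact absurd hab (mul_lt_mul_of_lt_of_le h (A.le_max' b hb)).ne
  · exact ⟨h, mul_left_cancel (h ▸ hab)⟩

instance : UniqueProds (FreeMonoid α) :=
  TwoUniqueProds.of_covariant_right.toUniqueProds

end FreeMonoid

namespace MonoidAlgebra

theorem support_coeff_lie_subset {R M : Type*} [Ring R] [Monoid M] [DecidableEq M]
    (x y : MonoidAlgebra R M) :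
    ⁅x, y⁆.coeff.support ⊆ x.coeff.support * y.coeff.support ∪ y.coeff.support * x.coeff.support :=
  (Ring.lie_def x y ▸ coeff_sub (x * y) (y * x) ▸ Finsupp.support_sub).trans
    (Finset.union_subset_union (support_coeff_mul_subset x y) (support_coeff_mul_subset y x))

theorem exists_mul_self_mem_support_mul_self {R α : Type*} [Semiring R] [NoZeroDivisors R]
    [LinearOrder α] {x : MonoidAlgebra R (FreeMonoid α)} (hx : x ≠ 0) :
    ∃ w, w * w ∈ (x * x).coeff.support := by
  obtain ⟨w, hw, hu⟩ := FreeMonoid.exists_uniqueMul_self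
    (Finsupp.support_nonempty_iff.2 (mt coeff_eq_zero.1 hx))
  refine ⟨w, Finsupp.mem_support_iff.2 ?_⟩
  rw [coeff_mul_mul_of_uniqueMul hu]
  exact mul_ne_zero (Finsupp.mem_support_iff.1 hw) (Finsupp.mem_support_iff.1 hw)

end MonoidAlgebra

theorem Units.val_commutatorElement_sub_one {A : Type*} [Ring A] (U V : Aˣ) :
    ((⁅U, V⁆ : Aˣ) : A) - 1 = ⁅(U : A) - 1, (V : A) - 1⁆ * ((U⁻¹ * V⁻¹ : Aˣ) : A) := by
  have h : ((U : A) - 1) * ((V : A) - 1) - ((V : A) - 1) * ((U : A) - 1) = U * V - V * U := by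
    noncomm_ring
  rw [Ring.lie_def, h, sub_mul]
  simp only [commutatorElement_def, Units.val_mul, mul_assoc, Units.mul_inv_cancel_left,
    Units.mul_inv]

namespace PowerSeries

section Semiring

variable {A : Type*} [Semiring A] {x y : A⟦X⟧} {d e : ℕ}

theorem X_pow_mul_mul_X_pow_mul (x y : A⟦X⟧) (d e : ℕ) :
    X ^ d * x * (X ^ e * y) = X ^ (d + e) * (x * y) := by
  rw [pow_add, mul_assoc, ← mul_assoc x, (commute_X_pow x e).eq, mul_assoc, mul_assoc]

theorem X_pow_add_dvd_mul (hx : X ^ d ∣ x) (hy : X ^ e ∣ y) : X ^ (d + e) ∣ x * y := by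
  obtain ⟨x, rfl⟩ := hx
  obtain ⟨y, rfl⟩ := hy
  exact ⟨x * y, X_pow_mul_mul_X_pow_mul x y d e⟩

theorem coeff_add_mul_of_X_pow_dvd (hx : X ^ d ∣ x) (hy : X ^ e ∣ y) :
    coeff (d + e) (x * y) = coeff d x * coeff e y := by
  obtain ⟨x, rfl⟩ := hx
  obtain ⟨y, rfl⟩ := hy
  simp [X_pow_mul_mul_X_pow_mul, coeff_X_pow_mul']

theorem X_pow_mul_dvd_pow (hx : X ^ d ∣ x) (k : ℕ) : X ^ (k * d) ∣ x ^ k := by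
  induction k with
  | zero => simp
  | succ k ih => simpa [add_mul, pow_succ] using X_pow_add_dvd_mul ih hx

theorem coeff_mul_pow_of_X_pow_dvd (hx : X ^ d ∣ x) (k : ℕ) :
    coeff (k * d) (x ^ k) = coeff d x ^ k := by
  induction k with
  | zero => simp
  | succ k ih =>
    rw [add_mul, one_mul, pow_succ, pow_succ,
      coeff_add_mul_of_X_pow_dvd (X_pow_mul_dvd_pow hx k) hx, ih]

theorem exists_mul_eq_and_coeff_pow_eq [NoZeroDivisors A] {s : A⟦X⟧} {p N : ℕ} (hp : p ≠ 0)
    (hN : X ^ N ∣ s ^ p) (hL : coeff N (s ^ p) ≠ 0) :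
    ∃ e, p * e = N ∧ coeff e s ^ p = coeff N (s ^ p) := by
  have hs : s ≠ 0 := by rintro rfl; simp [zero_pow hp] at hL
  have hcoeff := coeff_mul_pow_of_X_pow_dvd (X_pow_order_dvd (φ := s)) p
  have hne : coeff (p * s.order.toNat) (s ^ p) ≠ 0 := hcoeff ▸ pow_ne_zero _ (coeff_order hs)
  have hpe : p * s.order.toNat = N := by
    have h₁ := order_eq_nat.2 ⟨hne, X_pow_dvd_iff.1 (X_pow_mul_dvd_pow X_pow_order_dvd p)⟩
    have h₂ := order_eq_nat.2 ⟨hL, X_pow_dvd_iff.1 hN⟩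
    exact_mod_cast h₁.symm.trans h₂
  exact ⟨_, hpe, hpe ▸ hcoeff.symm⟩

end Semiring

section Ring

variable {A : Type*} [Ring A] {d e : ℕ}

theorem constantCoeff_eq_one_of_X_pow_dvd_sub_one {u : A⟦X⟧} (hd : 0 < d) (h : X ^ d ∣ u - 1) :
    constantCoeff u = 1 := by
  simpa [sub_eq_zero] using X_pow_dvd_iff.1 h 0 hd

theorem constantCoeff_inv_eq_one {U : A⟦X⟧ˣ} (h : constantCoeff (U : A⟦X⟧) = 1) :
    constantCoeff ((U⁻¹ : A⟦X⟧ˣ) : A⟦X⟧) = 1 := by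
  have := congrArg constantCoeff U.inv_mul
  rwa [map_mul, h, mul_one, map_one] at this

theorem X_pow_dvd_and_coeff_commutator_sub_one {U V : A⟦X⟧ˣ} (hd : 0 < d) (he : 0 < e)
    (hU : X ^ d ∣ (U : A⟦X⟧) - 1) (hV : X ^ e ∣ (V : A⟦X⟧) - 1) :
    X ^ (d + e) ∣ ((⁅U, V⁆ : A⟦X⟧ˣ) : A⟦X⟧) - 1 ∧
      coeff (d + e) (((⁅U, V⁆ : A⟦X⟧ˣ) : A⟦X⟧) - 1) =
        ⁅coeff d ((U : A⟦X⟧) - 1), coeff e ((V : A⟦X⟧) - 1)⁆ := by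
  have hvu : X ^ (d + e) ∣ ((V : A⟦X⟧) - 1) * ((U : A⟦X⟧) - 1) :=
    add_comm d e ▸ X_pow_add_dvd_mul hV hU
  have hL : X ^ (d + e) ∣ ⁅(U : A⟦X⟧) - 1, (V : A⟦X⟧) - 1⁆ := by
    rw [Ring.lie_def]
    exact dvd_sub (X_pow_add_dvd_mul hU hV) hvu
  have hW : X ^ 0 ∣ ((U⁻¹ * V⁻¹ : A⟦X⟧ˣ) : A⟦X⟧) := by simp
  have hW₀ : coeff 0 ((U⁻¹ * V⁻¹ : A⟦X⟧ˣ) : A⟦X⟧) = 1 := by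
    rw [coeff_zero_eq_constantCoeff_apply, Units.val_mul, map_mul,
      constantCoeff_inv_eq_one (constantCoeff_eq_one_of_X_pow_dvd_sub_one hd hU),
      constantCoeff_inv_eq_one (constantCoeff_eq_one_of_X_pow_dvd_sub_one he hV), one_mul]
  rw [Units.val_commutatorElement_sub_one]
  refine ⟨by simpa using X_pow_add_dvd_mul hL hW, ?_⟩
  rw [← add_zero (d + e), coeff_add_mul_of_X_pow_dvd hL hW, hW₀, mul_one, Ring.lie_def,
    Ring.lie_def, map_sub, coeff_add_mul_of_X_pow_dvd hU hV, add_comm d e,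
    coeff_add_mul_of_X_pow_dvd hV hU]

end Ring

end PowerSeries

def nestedCommutator : ℕ → ℕ → FreeGroup ℕ
  | 0, a => FreeGroup.of a
  | k + 1, a => ⁅nestedCommutator k (2 * a), nestedCommutator k (2 * a + 1)⁆

noncomputable def doubling : FreeGroup ℕ →* FreeGroup ℕ :=
  FreeGroup.lift fun i => ⁅FreeGroup.of (2 * i), FreeGroup.of (2 * i + 1)⁆

theorem doubling_nestedCommutator (k a : ℕ) :
    doubling (nestedCommutator k a) = nestedCommutator (k + 1) a := by
  induction k generalizing a with
  | zero => simp [doubling, nestedCommutator]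
  | succ k ih => rw [nestedCommutator, map_commutatorElement, ih, ih]; rfl

theorem map_val_castHom {m k : ℕ} (h : m = k) (t : FreeGroup (Fin m)) :
    FreeGroup.map Fin.val (castHom h t) = FreeGroup.map Fin.val t := by
  have : (FreeGroup.map Fin.val).comp (castHom h) = FreeGroup.map Fin.val :=
    FreeGroup.ext_hom _ _ fun i => by simp [castHom]
  exact DFunLike.congr_fun this t

theorem map_val_phi (m : ℕ) (t : FreeGroup (Fin m)) :
    FreeGroup.map Fin.val (phi m t) = doubling (FreeGroup.map Fin.val t) := by
  have : (FreeGroup.map Fin.val).comp (phi m) = doubling.comp (FreeGroup.map Fin.val) :=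
    FreeGroup.ext_hom _ _ fun i => by simp [phi, doubling, map_commutatorElement]
  exact DFunLike.congr_fun this t

theorem map_val_psi (n : ℕ) :
    FreeGroup.map Fin.val (psi n (FreeGroup.of 0)) = nestedCommutator n 0 := by
  induction n with
  | zero => simp [psi, map_val_castHom, nestedCommutator]
  | succ n ih => simp [psi, map_val_castHom, map_val_phi, ih, doubling_nestedCommutator]

section Magnus

variable (R : Type*) [Ring R]

/-- Power series over the free algebra, whose central variable `T` records word length, stand in
for noncommutative power series. -/
noncomputable def magnus : FreeGroup ℕ →* (MonoidAlgebra R (FreeMonoid ℕ))⟦X⟧ˣ :=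
  FreeGroup.lift fun i =>
    (isUnit_iff_constantCoeff.2 (by simp : IsUnit (constantCoeff
      (1 + X * C (MonoidAlgebra.of R _ (FreeMonoid.of i)))))).unit

theorem magnus_of (i : ℕ) :
    (magnus R (FreeGroup.of i) : (MonoidAlgebra R (FreeMonoid ℕ))⟦X⟧) =
      1 + X * C (MonoidAlgebra.of R _ (FreeMonoid.of i)) := by
  simp [magnus]

noncomputable def nestedBracket : ℕ → ℕ → MonoidAlgebra R (FreeMonoid ℕ)
  | 0, a => MonoidAlgebra.of R _ (FreeMonoid.of a)
  | k + 1, a => ⁅nestedBracket k (2 * a), nestedBracket k (2 * a + 1)⁆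

theorem magnus_nestedCommutator (k a : ℕ) :
    X ^ 2 ^ k ∣ (magnus R (nestedCommutator k a) : (MonoidAlgebra R (FreeMonoid ℕ))⟦X⟧) - 1 ∧
      coeff (2 ^ k)
          ((magnus R (nestedCommutator k a) : (MonoidAlgebra R (FreeMonoid ℕ))⟦X⟧) - 1) =
        nestedBracket R k a := by
  induction k generalizing a with
  | zero =>
    rw [nestedCommutator, nestedBracket, magnus_of, pow_zero, pow_one, add_sub_cancel_left]
    exact ⟨dvd_mul_right _ _, by simp⟩
  | succ k ih =>
    have h := X_pow_dvd_and_coeff_commutator_sub_one (Nat.two_pow_pos k) (Nat.two_pow_pos k)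
      (ih (2 * a)).1 (ih (2 * a + 1)).1
    rw [← two_mul, ← pow_succ', (ih (2 * a)).2, (ih (2 * a + 1)).2] at h
    rwa [nestedCommutator, map_commutatorElement, nestedBracket]

end Magnus

def blockWords (k a : ℕ) : Set (FreeMonoid ℕ) :=
  {w | w.length = 2 ^ k ∧ ∀ i ∈ w.toList, i / 2 ^ k = a}

theorem disjoint_blockWords {k a b : ℕ} (h : a ≠ b) :
    Disjoint (blockWords k a) (blockWords k b) := by
  refine Set.disjoint_left.2 fun w ⟨hl, ha⟩ ⟨_, hb⟩ => h ?_
  obtain ⟨i, hi⟩ :=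
    List.exists_mem_of_length_pos (show 0 < w.length from hl ▸ Nat.two_pow_pos k)
  exact (ha i hi).symm.trans (hb i hi)

theorem mul_mem_blockWords {k a : ℕ} {u v : FreeMonoid ℕ} (hu : u ∈ blockWords k (2 * a))
    (hv : v ∈ blockWords k (2 * a + 1)) :
    u * v ∈ blockWords (k + 1) a ∧ v * u ∈ blockWords (k + 1) a := by
  obtain ⟨hu, hu'⟩ := hu
  obtain ⟨hv, hv'⟩ := hv
  have key (i : ℕ) (hi : i ∈ u.toList ∨ i ∈ v.toList) : i / 2 ^ (k + 1) = a := by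
    rw [pow_succ, ← Nat.div_div_eq_div_mul]
    rcases hi with hi | hi
    · rw [hu' i hi]; omega
    · rw [hv' i hi]; omega
  have hlen : 2 ^ k + 2 ^ k = 2 ^ (k + 1) := by rw [pow_succ, mul_two]
  exact ⟨⟨by rw [FreeMonoid.length_mul, hu, hv, hlen], fun i hi => key i (by simpa using hi)⟩,
    ⟨by rw [FreeMonoid.length_mul, hu, hv, hlen],
      fun i hi => key i (by simpa [or_comm] using hi)⟩⟩

theorem eq_of_mul_eq_mul_of_mem_blockWords {k a b : ℕ} {u v u' v' : FreeMonoid ℕ}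
    (hu : u ∈ blockWords k a) (hu' : u' ∈ blockWords k b) (h : u * v = u' * v') : a = b := by
  by_contra hab
  exact Set.disjoint_left.1 (disjoint_blockWords hab) hu
    ((FreeMonoid.mul_inj_of_length_eq h (hu.1.trans hu'.1.symm)).1 ▸ hu')

section NestedBracket

variable {R : Type*} [Ring R]

theorem support_nestedBracket_subset (k a : ℕ) :
    ↑(nestedBracket R k a).coeff.support ⊆ blockWords k a := by
  classical
  induction k generalizing a with
  | zero =>
    intro w hw
    rw [nestedBracket, MonoidAlgebra.of_apply, MonoidAlgebra.coeff_single] at hw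
    obtain rfl := Finset.mem_singleton.1 (Finsupp.support_single_subset hw)
    simp [blockWords]
  | succ k ih =>
    intro w hw
    rcases Finset.mem_union.1 (MonoidAlgebra.support_coeff_lie_subset _ _ hw) with h | h <;>
      obtain ⟨u, hu, v, hv, rfl⟩ := Finset.mem_mul.1 h
    · exact (mul_mem_blockWords (ih _ hu) (ih _ hv)).1
    · exact (mul_mem_blockWords (ih _ hv) (ih _ hu)).2

variable [IsDomain R]

theorem nestedBracket_ne_zero (k a : ℕ) : nestedBracket R k a ≠ 0 := by
  classical
  induction k generalizing a with
  | zero => simp [nestedBracket]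
  | succ k ih =>
    obtain ⟨u, hu, v, hv, huv⟩ := UniqueProds.uniqueMul_of_nonempty
      (Finsupp.support_nonempty_iff.2 (mt MonoidAlgebra.coeff_eq_zero.1 (ih (2 * a))))
      (Finsupp.support_nonempty_iff.2 (mt MonoidAlgebra.coeff_eq_zero.1 (ih (2 * a + 1))))
    have hvu :
        (nestedBracket R k (2 * a + 1) * nestedBracket R k (2 * a)).coeff (u * v) = 0 := by
      refine Finsupp.notMem_support_iff.1 fun h => ?_
      obtain ⟨v', hv', u', -, h⟩ :=
        Finset.mem_mul.1 (MonoidAlgebra.support_coeff_mul_subset _ _ h)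
      have := eq_of_mul_eq_mul_of_mem_blockWords (support_nestedBracket_subset k _ hu)
        (support_nestedBracket_subset k _ hv') h.symm
      omega
    intro h0
    have := congrArg (fun x => x.coeff (u * v)) h0
    simp only [nestedBracket, Ring.lie_def, MonoidAlgebra.coeff_sub, Finsupp.sub_apply,
      MonoidAlgebra.coeff_mul_mul_of_uniqueMul huv, hvu, sub_zero, MonoidAlgebra.coeff_zero,
      Finsupp.coe_zero, Pi.zero_apply] at this
    exact mul_ne_zero (Finsupp.mem_support_iff.1 hu) (Finsupp.mem_support_iff.1 hv) this

theorem mul_self_ne_nestedBracket (x : MonoidAlgebra R (FreeMonoid ℕ)) (k a : ℕ) :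
    x * x ≠ nestedBracket R (k + 1) a := by
  classical
  intro hx
  obtain ⟨w, hw⟩ := MonoidAlgebra.exists_mul_self_mem_support_mul_self (x := x)
    (by rintro rfl; exact nestedBracket_ne_zero (k + 1) a (by simpa using hx.symm))
  rw [hx] at hw
  have key {b c : ℕ} (hbc : b ≠ c) (h : w * w ∈ (nestedBracket R k b).coeff.support *
      (nestedBracket R k c).coeff.support) : False := by
    obtain ⟨u, hu, v, hv, h⟩ := Finset.mem_mul.1 h
    have hu := support_nestedBracket_subset k _ hu
    have hv := support_nestedBracket_subset k _ hv
    have hw : w.length = u.length := by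
      have := congrArg FreeMonoid.length h
      simp only [FreeMonoid.length_mul] at this
      have := hu.1.trans hv.1.symm
      omega
    obtain ⟨rfl, rfl⟩ := FreeMonoid.mul_inj_of_length_eq h hw.symm
    exact Set.disjoint_left.1 (disjoint_blockWords hbc) hu hv
  rcases Finset.mem_union.1 (MonoidAlgebra.support_coeff_lie_subset _ _ hw) with h | h
  · exact key (by omega) h
  · exact key (by omega) h

end NestedBracket

/-- For every prime `p` and every `n`, the image `ψₙ x₀` of the generator of `F_1`
has no `p`-th root in `F_{2^n}`. -/
theorem psi_of_zero_has_no_p_root (p : ℕ) (hp : p.Prime) (n : ℕ) :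
    ¬∃ y : FreeGroup (Fin (2 ^ n)), y ^ p = psi n (FreeGroup.of 0) := by
  have := Fact.mk hp
  rintro ⟨y, hy⟩
  let : CharP (MonoidAlgebra (ZMod p) (FreeMonoid ℕ))⟦X⟧ p :=
    charP_of_injective_algebraMap (algebraMap (ZMod p) _).injective p
  set s :=
    (magnus (ZMod p) (FreeGroup.map Fin.val y) : (MonoidAlgebra (ZMod p) (FreeMonoid ℕ))⟦X⟧) - 1
  obtain ⟨hdvd, hcoeff⟩ := magnus_nestedCommutator (ZMod p) n 0
  have hs : s ^ p = (magnus (ZMod p) (nestedCommutator n 0) : _) - 1 := by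
    rw [sub_pow_char_of_commute _ (Commute.one_right _), one_pow, ← Units.val_pow_eq_pow_val,
      ← map_pow, ← map_pow, hy, map_val_psi]
  rw [← hs] at hdvd hcoeff
  obtain ⟨e, hpe, he⟩ := PowerSeries.exists_mul_eq_and_coeff_pow_eq hp.ne_zero hdvd
    (hcoeff ▸ nestedBracket_ne_zero n 0)
  obtain rfl : p = 2 :=
    (Nat.prime_dvd_prime_iff_eq hp Nat.prime_two).1 (hp.dvd_of_dvd_pow ⟨e, hpe.symm⟩)
  cases n with
  | zero => omega
  | succ k => exact mul_self_ne_nestedBracket _ k 0 (by rw [← sq, he, hcoeff])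
end

section
/- Let H be the group with presentation ⟨x₁, x₂, x₃, … | x_i = [x_{2i}, x_{2i+1}] for all i ≥ 1⟩. Then for every prime p, the image of the generator x₁ in H has no p-th root: there is no y ∈ H with y^p = x₁. In particular H is not uniquely p-divisible for any prime p. -/
/-!
If every element of `S ⊆ G` is a commutator of two elements of `S`, labelling the binary tree of
generators of `𝓗` top-down by such decompositions makes every element of `S` the image of `x₁`
under a homomorphism from `𝓗`.

The permutations `(a, b) ↦ ((g ^ f b) a, b)` of `ℤ × ℤ`, for `g` the unit translation or the
`p`-cycle on `{0, …, p - 1}`, together with the shears `(a, b) ↦ (a, b + f a)`, form such a set: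
each is the commutator of the same map with `f` replaced by a discrete antiderivative
(`F k - F (k - 1) = f k`) and a unit translation of the other coordinate. Taking for `f` the
indicator of `0` gives a `p`-cycle `c` on `{0, …, p - 1} × {0}` in the set. A `p`-th root `τ` of
`c` would have an orbit of length `p²` consisting of points moved by `c`, but `c` moves only `p`
points.
-/

open scoped commutatorElement

/-- The relators `xᵢ · ⁅x_{2i}, x_{2i+1}⁆⁻¹` of Berrick and Casacuberta's group `𝓗`,
on generators indexed by the positive integers. -/
def hRels : Set (FreeGroup ℕ+) :=
  {r | ∃ i : ℕ+, r = FreeGroup.of i * ⁅FreeGroup.of (2 * i), FreeGroup.of (2 * i + 1)⁆⁻¹}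

open Equiv Finset Function

theorem exists_hom_of_subset_image2_commutatorElement {G : Type*} [Group G] {S : Set G}
    (hS : S ⊆ Set.image2 (⁅·, ·⁆) S S) {s : G} (hs : s ∈ S) :
    ∃ φ : PresentedGroup hRels →* G, φ (PresentedGroup.of 1) = s := by
  choose! left hleft right hright hcomm using fun t (ht : t ∈ S) => hS ht
  let label : ℕ → G :=
    Nat.binaryRecFromOne (motive := fun _ => G) s s fun b _ _ g => cond b (right g) (left g)
  have label_bit (b : Bool) {n : ℕ} (hn : n ≠ 0) :
      label (Nat.bit b n) = cond b (right (label n)) (left (label n)) :=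
    Nat.binaryRecFromOne_eq b n hn
  have label_mem (n : ℕ) : label n ∈ S := by
    induction n using Nat.binaryRecFromOne with
    | zero | one => simpa [label]
    | bit b n hn ih =>
      rw [label_bit b hn]
      cases b
      exacts [hleft _ ih, hright _ ih]
  have hrels : ∀ r ∈ hRels, FreeGroup.lift (fun i : ℕ+ => label i) r = 1 := by
    rintro _ ⟨i, rfl⟩
    have h2 : label (2 * i) = left (label i) := label_bit false i.ne_zero
    have h3 : label (2 * i + 1) = right (label i) := label_bit true i.ne_zero
    simp only [map_mul, map_inv, map_commutatorElement, FreeGroup.lift_apply_of, PNat.mul_coe,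
      PNat.add_coe, PNat.val_ofNat, h2, h3, hcomm _ (label_mem i), mul_inv_cancel]
  exact ⟨PresentedGroup.toGroup hrels, by simp [label]⟩

namespace Equiv.Perm

variable {α : Type*} {p : ℕ} {τ c : Perm α} {x : α}

theorem minimalPeriod_eq_sq_of_pow_eq (hp : p.Prime) (hτ : τ ^ p = c) (hx : c x ≠ x)
    (hxp : (c ^ p) x = x) : minimalPeriod τ x = p ^ 2 := by
  have := Fact.mk hp
  refine minimalPeriod_eq_prime_pow (k := 1) ?_ ?_
  · rwa [pow_one, IsPeriodicPt, IsFixedPt, ← coe_pow, hτ]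
  · rwa [IsPeriodicPt, IsFixedPt, ← coe_pow, sq, pow_mul, hτ]

theorem sq_le_card_of_pow_eq (hp : p.Prime) (hτ : τ ^ p = c) (hx : c x ≠ x)
    (hxp : (c ^ p) x = x) {S : Finset α} (hS : ∀ y, c y ≠ y → y ∈ S) : p ^ 2 ≤ #S := by
  have hmoved (j : ℕ) : c (τ^[j] x) ≠ τ^[j] x := by
    have hcomm : c * τ ^ j = τ ^ j * c := hτ ▸ pow_mul_comm τ p j
    rw [← coe_pow, ← mul_apply, hcomm, mul_apply]
    exact (τ ^ j).injective.ne hx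
  rw [← minimalPeriod_eq_sq_of_pow_eq hp hτ hx hxp, ← card_range (minimalPeriod τ x)]
  exact card_le_card_of_injOn _ (fun j _ => hS _ (hmoved j))
    (by simpa using iterate_injOn_Iio_minimalPeriod)

end Equiv.Perm

theorem exists_sub_apply_sub_one_eq {M : Type*} [AddCommGroup M] (f : ℤ → M) :
    ∃ F : ℤ → M, ∀ k, F k - F (k - 1) = f k := by
  refine ⟨fun k => ∑ i ∈ Ioc 0 k, f i - ∑ i ∈ Ioc k 0, f i, fun k => ?_⟩
  dsimp only
  rcases lt_or_ge 0 k with hk | hk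
  · rw [← insert_Ioc_sub_one_right_eq_Ioc hk, sum_insert (by simp), Ioc_eq_empty_of_le hk.le,
      Ioc_eq_empty_of_le (show 0 ≤ k - 1 by omega)]
    abel
  · rw [← insert_Ioc_left_eq_Ioc_sub_one hk, sum_insert (by simp), Ioc_eq_empty_of_le hk,
      Ioc_eq_empty_of_le (show k - 1 ≤ 0 by omega)]
    abel

@[simps]
def shearFst (g : Perm ℤ) (f : ℤ → ℤ) : Perm (ℤ × ℤ) where
  toFun x := ((g ^ f x.2) x.1, x.2)
  invFun x := ((g ^ f x.2)⁻¹ x.1, x.2)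
  left_inv x := by simp
  right_inv x := by simp

@[simps]
def shearSnd (g : Perm ℤ) (f : ℤ → ℤ) : Perm (ℤ × ℤ) where
  toFun x := (x.1, (g ^ f x.1) x.2)
  invFun x := (x.1, (g ^ f x.1)⁻¹ x.2)
  left_inv x := by simp
  right_inv x := by simp

section Shears

variable (g : Perm ℤ) (f : ℤ → ℤ)

theorem commutatorElement_shearFst_shearSnd {F : ℤ → ℤ} (hF : ∀ k, F k - F (k - 1) = f k) :
    ⁅shearFst g F, shearSnd (Equiv.addRight 1) 1⁆ = shearFst g f := by
  ext ⟨a, b⟩ <;>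
    simp [commutatorElement_def, Perm.inv_def, Perm.mul_apply, ← sub_eq_add_neg, ← hF, zpow_sub]

theorem commutatorElement_shearSnd_shearFst {F : ℤ → ℤ} (hF : ∀ k, F k - F (k - 1) = f k) :
    ⁅shearSnd g F, shearFst (Equiv.addRight 1) 1⁆ = shearSnd g f := by
  ext ⟨a, b⟩ <;>
    simp [commutatorElement_def, Perm.inv_def, Perm.mul_apply, ← sub_eq_add_neg, ← hF, zpow_sub]

theorem shearFst_pow_apply (n : ℕ) (x : ℤ × ℤ) :
    (shearFst g f ^ n) x = ((g ^ (n * f x.2)) x.1, x.2) := by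
  induction n generalizing x with
  | zero => simp
  | succ n ih => simp [pow_succ, Perm.mul_apply, ih, add_mul, zpow_add]

end Shears

def intCycle (p : ℕ) : Perm ℤ where
  toFun a := if 0 ≤ a ∧ a + 1 < p then a + 1 else if 0 ≤ a ∧ a + 1 = p then 0 else a
  invFun a := if 0 < a ∧ a < p then a - 1 else if a = 0 ∧ 0 < (p : ℤ) then p - 1 else a
  left_inv a := by simp only; split_ifs <;> omega
  right_inv a := by simp only; split_ifs <;> omega

theorem intCycle_apply (p : ℕ) (a : ℤ) :
    intCycle p a = if 0 ≤ a ∧ a + 1 < p then a + 1 else if 0 ≤ a ∧ a + 1 = p then 0 else a :=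
  rfl

theorem intCycle_pow_apply_zero {p k : ℕ} (hk : k < p) : (intCycle p ^ k) 0 = k := by
  induction k with
  | zero => simp
  | succ k ih =>
    rw [pow_succ', Perm.mul_apply, ih (by omega), intCycle_apply]
    split_ifs <;> omega

theorem intCycle_pow_self_apply_zero (p : ℕ) : (intCycle p ^ p) 0 = 0 := by
  cases p with
  | zero => simp
  | succ q =>
    rw [pow_succ', Perm.mul_apply, intCycle_pow_apply_zero (Nat.lt_succ_self q), intCycle_apply]
    split_ifs <;> omega

theorem mem_Ico_of_intCycle_apply_ne {p : ℕ} {a : ℤ} (h : intCycle p a ≠ a) :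
    a ∈ Ico 0 (p : ℤ) := by
  rw [intCycle_apply] at h
  rw [mem_Ico]
  split_ifs at h <;> omega

def shearSet (p : ℕ) : Set (Perm (ℤ × ℤ)) :=
  Set.range (shearFst (intCycle p)) ∪ Set.range (shearFst (Equiv.addRight 1)) ∪
    Set.range (shearSnd (Equiv.addRight 1))

theorem shearSet_subset_image2_commutatorElement (p : ℕ) :
    shearSet p ⊆ Set.image2 (⁅·, ·⁆) (shearSet p) (shearSet p) := by
  rintro _ ((⟨f, rfl⟩ | ⟨f, rfl⟩) | ⟨f, rfl⟩) <;> obtain ⟨F, hF⟩ := exists_sub_apply_sub_one_eq f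
  · exact ⟨_, .inl (.inl ⟨F, rfl⟩), _, .inr ⟨1, rfl⟩, commutatorElement_shearFst_shearSnd _ _ hF⟩
  · exact ⟨_, .inl (.inr ⟨F, rfl⟩), _, .inr ⟨1, rfl⟩, commutatorElement_shearFst_shearSnd _ _ hF⟩
  · exact ⟨_, .inr ⟨F, rfl⟩, _, .inl (.inr ⟨1, rfl⟩), commutatorElement_shearSnd_shearFst _ _ hF⟩

theorem not_exists_pow_eq_shearFst_intCycle {p : ℕ} (hp : p.Prime) :
    ¬∃ τ : Perm (ℤ × ℤ), τ ^ p = shearFst (intCycle p) (Pi.single 0 1) := by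
  rintro ⟨τ, hτ⟩
  have hmoved : shearFst (intCycle p) (Pi.single 0 1) (0, 0) ≠ (0, 0) := by
    have : intCycle p 0 = 1 := by simpa using intCycle_pow_apply_zero (k := 1) hp.one_lt
    simp [this]
  have hperiodic : (shearFst (intCycle p) (Pi.single 0 1) ^ p) (0, 0) = (0, 0) := by
    simp [shearFst_pow_apply, intCycle_pow_self_apply_zero]
  have hsupport (y : ℤ × ℤ) (hy : shearFst (intCycle p) (Pi.single 0 1) y ≠ y) :
      y ∈ Ico 0 (p : ℤ) ×ˢ {0} := by
    obtain ⟨a, b⟩ := y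
    rcases eq_or_ne b 0 with rfl | hb
    · simp only [shearFst_apply, Pi.single_eq_same, zpow_one, ne_eq, Prod.mk.injEq, and_true] at hy
      simpa using mem_Ico_of_intCycle_apply_ne hy
    · simp [hb] at hy
  have hcard := Perm.sq_le_card_of_pow_eq hp hτ hmoved hperiodic hsupport
  simp only [card_product, Int.card_Ico, sub_zero, Int.toNat_natCast, card_singleton,
    mul_one] at hcard
  nlinarith [hp.two_le]

/-- In `𝓗 = ⟨x₁, x₂, … ∣ xᵢ = ⁅x_{2i}, x_{2i+1}⁆⟩`, the generator `x₁` has no `p`-th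
root for any prime `p`; in particular `𝓗` is not uniquely `p`-divisible. -/
theorem generator_has_no_p_root (p : ℕ) (hp : p.Prime) :
    (¬∃ y : PresentedGroup hRels, y ^ p = PresentedGroup.of (1 : ℕ+)) ∧
      ¬Function.Bijective fun x : PresentedGroup hRels => x ^ p := by
  have hroot : ¬∃ y : PresentedGroup hRels, y ^ p = PresentedGroup.of (1 : ℕ+) := by
    rintro ⟨y, hy⟩
    obtain ⟨φ, hφ⟩ := exists_hom_of_subset_image2_commutatorElement
      (shearSet_subset_image2_commutatorElement p) (.inl (.inl ⟨Pi.single 0 1, rfl⟩))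
    exact not_exists_pow_eq_shearFst_intCycle hp ⟨φ y, by rw [← map_pow, hy, hφ]⟩
  exact ⟨hroot, fun hbij => hroot (hbij.surjective _)⟩
end

section
/- Let H be the group with presentation ⟨x₁, x₂, x₃, … | x_i = [x_{2i}, x_{2i+1}] for all i ≥ 1⟩. Then H is perfect: its commutator subgroup equals H. -/
open scoped commutatorElement

theorem commutator_eq_top_of_closure_eq_top {G : Type*} [Group G] {S : Set G}
    (hS : Subgroup.closure S = ⊤) (hS_comm : S ⊆ commutatorSet G) : commutator G = ⊤ := by
  rw [commutator_eq_closure, eq_top_iff, ← hS]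
  exact Subgroup.closure_mono hS_comm

lemma hRels_of_eq_commutator (i : ℕ+) :
    (PresentedGroup.of i : PresentedGroup hRels) =
      ⁅(PresentedGroup.of (2 * i) : PresentedGroup hRels), PresentedGroup.of (2 * i + 1)⁆ :=
  (PresentedGroup.mk_eq_mk_of_mul_inv_mem (rels := hRels) ⟨i, rfl⟩).trans
    (map_commutatorElement _ _ _)

/-- The group `𝓗 = ⟨x₁, x₂, … ∣ xᵢ = ⁅x_{2i}, x_{2i+1}⁆⟩` is perfect. -/
theorem presentedGroup_perfect : commutator (PresentedGroup hRels) = ⊤ := by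
  refine commutator_eq_top_of_closure_eq_top (PresentedGroup.closure_range_of hRels) ?_
  rintro _ ⟨i, rfl⟩
  rw [hRels_of_eq_commutator i]
  exact commutator_mem_commutatorSet _ _
end
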